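/- In Clear Mastermind with n positions and k = c·n colors (c ≥ 1), the codebreaker can always win in c + n − 1 guesses, so F(c·n, n) ≤ c + n − 1. -/

import Mathlib

attribute [local instance] Classical.propDecidable

namespace CM

/-- Wordle-style feedback symbols: Green, Yellow, Black. -/
inductive Fbk | G | Y | B
deriving DecidableEq

variable {k n : ℕ}

/-- The multiset of values of the answer `y` at positions not exactly matched
by the guess `x`. -/
def misses (x y : Fin n → Fin k) : Multiset (Fin k) :=
  (Finset.univ.filter (fun i => x i ≠ y i)).val.map y

/-- The multiset of still-unmatched answer values after greedily processing the
first `j` positions of the guess left to right. -/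
def fbState (x y : Fin n → Fin k) : ℕ → Multiset (Fin k)
  | 0 => misses x y
  | j + 1 =>
    if h : j < n then
      if x ⟨j, h⟩ = y ⟨j, h⟩ then fbState x y j
      else if x ⟨j, h⟩ ∈ fbState x y j then (fbState x y j).erase (x ⟨j, h⟩)
      else fbState x y j
    else fbState x y j

/-- Wordle-style feedback: `G` for an exact match, otherwise `Y` if the guessed
value occurs among the remaining unmatched values of the answer (consumed
greedily left to right), and `B` otherwise. -/
def feedback (x y : Fin n → Fin k) (i : Fin n) : Fbk :=
  if x i = y i then Fbk.G
  else if x i ∈ fbState x y i.val then Fbk.Y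
  else Fbk.B

/-- A codebreaker strategy: the next guess as a function of the feedback
received so far. -/
def Strategy (k n : ℕ) : Type :=
  List (Fin n → Fbk) → (Fin n → Fin k)

/-- The feedback history after `r` rounds of playing strategy `S` against
secret `y`. -/
def hist (S : Strategy k n) (y : Fin n → Fin k) : ℕ → List (Fin n → Fbk)
  | 0 => []
  | r + 1 => hist S y r ++ [feedback (S (hist S y r)) y]

/-- The guess made by strategy `S` in round `r` (0-indexed) against secret `y`. -/
def guess (S : Strategy k n) (y : Fin n → Fin k) (r : ℕ) : Fin n → Fin k :=
  S (hist S y r)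

/-- `S` wins within `m` rounds: against every secret, one of the first `m`
guesses equals the secret. -/
def WinsIn (S : Strategy k n) (m : ℕ) : Prop :=
  ∀ y : Fin n → Fin k, ∃ r < m, guess S y r = y

/-- `F k n`: the least `m` such that some codebreaker strategy wins the Clear
Mastermind game with `k` colors and `n` positions within `m` rounds. -/
noncomputable def F (k n : ℕ) : ℕ :=
  sInf {m | ∃ S : Strategy k n, WinsIn S m}

end CM

/-
Split the `c·n` colours into `c` blocks of `n` and play the blocks as the first `c` guesses.
Every block guess is injective, so its black marks reveal exactly the set `R` of colours of the
secret, and its green marks pin some positions. If `|R| < n`, trying the colours of `R` one at a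
time at every unpinned position takes at most `n - 1` further rounds. If `|R| = n` the secret is a
bijection onto `R`. Either every colour of `R` was green in the opening, and the secret is known,
or some `v₀ ∈ R` is known to avoid the position `p` where it was played: then `p` runs through
`R \ {v₀}` one colour ahead of the other positions, which start with `v₀`; once `p` turns green
its colour is dropped for everybody, so again `n - 1` rounds suffice.
-/

open Function Finset

namespace CM

variable {k n : ℕ}

theorem feedback_eq_G_iff {x y : Fin n → Fin k} {i : Fin n} :
    feedback x y i = .G ↔ x i = y i := by
  unfold feedback
  split_ifs <;> simp_all

theorem mem_fbState_iff_of_injective {x y : Fin n → Fin k} (hx : Injective x) {i : Fin n}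
    {j : ℕ} (hj : j ≤ i) : x i ∈ fbState x y j ↔ x i ∈ misses x y := by
  induction j with
  | zero => rfl
  | succ j ih =>
    have hjn : j < n := by omega
    have hne : x i ≠ x ⟨j, hjn⟩ := hx.ne (Fin.ne_of_val_ne (by simp; omega))
    rw [fbState, dif_pos hjn]
    split_ifs <;> simp only [Multiset.mem_erase_of_ne hne, ih (by omega)]

theorem feedback_ne_B_iff_of_injective {x y : Fin n → Fin k} (hx : Injective x) {i : Fin n} :
    feedback x y i ≠ .B ↔ x i ∈ Set.range y := by
  have hmisses : x i ∈ misses x y ↔ ∃ j, x j ≠ y j ∧ y j = x i := by simp [misses]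
  rw [feedback]
  split_ifs with hG hY
  · simpa using ⟨i, hG.symm⟩
  · obtain ⟨j, -, hj⟩ := hmisses.1 ((mem_fbState_iff_of_injective hx le_rfl).1 hY)
    simpa using ⟨j, hj⟩
  · simp only [ne_eq, not_true_eq_false, false_iff]
    rintro ⟨j, hj⟩
    have hxj : x j ≠ y j := fun h => hG (hx (h.trans hj) ▸ hj.symm)
    exact hY ((mem_fbState_iff_of_injective hx le_rfl).2 (hmisses.2 ⟨j, hxj, hj⟩))

section History

variable (S : Strategy k n) (y : Fin n → Fin k)

theorem length_hist (r : ℕ) : (hist S y r).length = r := by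
  induction r with
  | zero => rfl
  | succ r ih => simp [hist, ih]

theorem getElem?_hist {r m : ℕ} (h : r < m) :
    (hist S y m)[r]? = some (feedback (guess S y r) y) := by
  induction m with
  | zero => omega
  | succ m ih =>
    rw [hist]
    rcases Nat.lt_succ_iff_lt_or_eq.1 h with h | rfl
    · rw [List.getElem?_append_left (by rwa [length_hist]), ih h]
    · simp [length_hist, guess]

end History

def Strategy.openingThen {σ : Type*} (c : ℕ) (opening : Fin c → Fin n → Fin k)
    (init : (Fin c → Fin n → Fbk) → σ) (next : σ → (Fin n → Fbk) → σ)
    (out : σ → Fin n → Fin k) : Strategy k n := fun h =>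
  if hc : h.length < c then opening ⟨h.length, hc⟩
  else out ((h.drop c).foldl next (init fun r => h[r.1]?.getD fun _ => .B))

section OpeningThen

variable {σ : Type*} {c : ℕ} {opening : Fin c → Fin n → Fin k}
  {init : (Fin c → Fin n → Fbk) → σ} {next : σ → (Fin n → Fbk) → σ} {out : σ → Fin n → Fin k}
  (y : Fin n → Fin k)

theorem guess_openingThen_of_lt (r : Fin c) :
    guess (.openingThen c opening init next out) y r = opening r := by
  simp [guess, Strategy.openingThen, length_hist]

theorem guess_openingThen_add (j : ℕ) :
    guess (.openingThen c opening init next out) y (c + j) =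
      out ((fun s => next s (feedback (out s) y))^[j] (init fun r => feedback (opening r) y)) := by
  set S : Strategy k n := .openingThen c opening init next out
  have hinit (m : ℕ) (hm : c ≤ m) :
      (fun r : Fin c => (hist S y m)[r.1]?.getD fun _ => .B) = fun r => feedback (opening r) y := by
    funext r
    rw [getElem?_hist S y (by omega), guess_openingThen_of_lt]
    rfl
  have hS (m : ℕ) (hm : c ≤ m) : S (hist S y m) =
      out (((hist S y m).drop c).foldl next (init fun r => feedback (opening r) y)) := by
    simp only [S, Strategy.openingThen, length_hist, dif_neg (not_lt.2 hm), hinit m hm]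
  suffices hrun : ((hist S y (c + j)).drop c).foldl next (init fun r => feedback (opening r) y) =
      (fun s => next s (feedback (out s) y))^[j] (init fun r => feedback (opening r) y) by
    rw [guess, hS _ (by omega), hrun]
  induction j with
  | zero => simp [List.drop_of_length_le, length_hist]
  | succ j ih =>
    rw [← add_assoc, hist, List.drop_append_of_le_length (by simp [length_hist]),
      List.foldl_append, ih, iterate_succ_apply', hS _ (by omega), ih]
    rfl

end OpeningThen

/-- In `chain` mode every unpinned position tries the colours of `todo` in order. In `pair`
mode the secret is injective and position `p` is known to avoid the head of `todo`, so `p` runs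
one colour ahead of the other unpinned positions. -/
inductive Mode (k n : ℕ)
  | chain (todo : List (Fin k))
  | pair (p : Fin n) (todo : List (Fin k))

def Mode.todo : Mode k n → List (Fin k)
  | .chain todo | .pair _ todo => todo

def Mode.rounds : Mode k n → ℕ
  | .chain todo => max 1 todo.length
  | .pair _ todo => todo.length - 1

structure State (k n : ℕ) where
  pins : Fin n → Option (Fin k)
  mode : Mode k n

namespace State

variable (d : Fin k) (y : Fin n → Fin k)

def guess (s : State k n) (i : Fin n) : Fin k :=
  (s.pins i).getD <| match s.mode with
    | .chain todo => todo.headD d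
    | .pair p todo => if i = p then todo.tail.headD d else todo.headD d

def next (s : State k n) (fb : Fin n → Fbk) : State k n where
  pins i := if fb i = .G then some (s.guess d i) else s.pins i
  mode := match s.mode with
    | .chain todo => .chain todo.tail
    | .pair p todo => if fb p = .G then .chain todo.tail.tail else .pair p todo.tail

def step (s : State k n) : State k n :=
  s.next d (feedback (s.guess d) y)

structure Consistent (s : State k n) : Prop where
  eq_of_pins : ∀ i v, s.pins i = some v → y i = v
  mem_todo : ∀ i, s.pins i = none → y i ∈ s.mode.todo
  of_pair : ∀ p todo, s.mode = .pair p todo → Injective y ∧ s.pins p = none ∧ y p ∈ todo.tail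

variable {d y}

theorem pins_step_eq_none {s : State k n} {i : Fin n} :
    (s.step d y).pins i = none ↔ s.pins i = none ∧ s.guess d i ≠ y i := by
  simp only [step, next, feedback_eq_G_iff]
  split_ifs with h <;> simp [h]

theorem eq_of_pins_step {s : State k n} (hs : ∀ i v, s.pins i = some v → y i = v) :
    ∀ i v, (s.step d y).pins i = some v → y i = v := by
  intro i v hv
  simp only [step, next, feedback_eq_G_iff] at hv
  split_ifs at hv with h
  · exact h.symm.trans (Option.some_injective _ hv)
  · exact hs i v hv

namespace Consistent

variable {s : State k n}

theorem guess_eq (hs : s.Consistent y) (hr : s.mode.rounds ≤ 1) : s.guess d = y := by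
  funext i
  rcases hpin : s.pins i with _ | v
  swap
  · simp [guess, hpin, hs.eq_of_pins i v hpin]
  have hi := hs.mem_todo i hpin
  rcases hmode : s.mode with todo | ⟨p, todo⟩ <;> rw [hmode] at hi hr
  · match todo, hr with
    | [v], _ => simp_all [guess, Mode.todo]
  · obtain ⟨hinj, -, hp⟩ := hs.of_pair p todo hmode
    match todo, hr, hp with
    | [v, w], _, hp =>
      simp only [List.tail_cons, List.mem_singleton] at hp
      by_cases hip : i = p
      · subst hip; simp [guess, hpin, hmode, hp]
      · have : y i ≠ w := hp ▸ hinj.ne hip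
        simp_all [guess, Mode.todo]

theorem mem_tail_of_pins_step (hs : s.Consistent y) {i : Fin n}
    (hi : (s.step d y).pins i = none) (hip : ∀ p todo, s.mode = .pair p todo → i ≠ p) :
    y i ∈ s.mode.todo.tail := by
  obtain ⟨hpin, hne⟩ := pins_step_eq_none.1 hi
  have hmem := hs.mem_todo i hpin
  have hguess : s.guess d i = s.mode.todo.headD d := by
    rcases hmode : s.mode with todo | ⟨p, todo⟩
    · simp [guess, hpin, hmode, Mode.todo]
    · simp [guess, hpin, hmode, Mode.todo, hip _ _ hmode]
  rw [hguess] at hne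
  rcases htodo : s.mode.todo with _ | ⟨v, rest⟩ <;> rw [htodo] at hmem hne
  · simp at hmem
  · exact (List.mem_cons.1 hmem).resolve_left (by simpa [eq_comm] using hne)

theorem step_of_chain (hs : s.Consistent y) {todo : List (Fin k)} (hmode : s.mode = .chain todo)
    (hr : 2 ≤ todo.length) :
    (s.step d y).Consistent y ∧ (s.step d y).mode.rounds + 1 = s.mode.rounds := by
  have hmode' : (s.step d y).mode = .chain todo.tail := by simp [step, next, hmode]
  refine ⟨⟨eq_of_pins_step hs.eq_of_pins, fun i hi => ?_, by simp [hmode']⟩, ?_⟩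
  · simpa [hmode', hmode, Mode.todo] using hs.mem_tail_of_pins_step hi (by simp [hmode])
  · simp only [hmode', hmode, Mode.rounds, List.length_tail]
    omega

theorem step_of_pair (hs : s.Consistent y) {p : Fin n} {todo : List (Fin k)}
    (hmode : s.mode = .pair p todo) (hr : 3 ≤ todo.length) :
    (s.step d y).Consistent y ∧ (s.step d y).mode.rounds + 1 = s.mode.rounds := by
  obtain ⟨v, w, rest, rfl⟩ : ∃ v w rest, todo = v :: w :: rest :=
    match todo, hr with | v :: w :: rest, _ => ⟨v, w, rest, rfl⟩
  obtain ⟨hinj, hpinp, hp⟩ := hs.of_pair p _ hmode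
  have hguessp : s.guess d p = w := by simp [guess, hpinp, hmode]
  have htail (i : Fin n) (hi : (s.step d y).pins i = none) (hip : i ≠ p) : y i ∈ w :: rest := by
    simpa [hmode, Mode.todo] using hs.mem_tail_of_pins_step hi (by simp [hmode, hip])
  simp only [List.length_cons] at hr
  by_cases hG : w = y p
  · have hmode' : (s.step d y).mode = .chain rest := by
      simp [step, next, hmode, feedback_eq_G_iff, hguessp, hG]
    refine ⟨⟨eq_of_pins_step hs.eq_of_pins, fun i hi => ?_, by simp [hmode']⟩, ?_⟩
    · have hip : i ≠ p := fun h => (pins_step_eq_none.1 (h ▸ hi)).2 (hguessp.trans hG)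
      have hw : y i ≠ w := hG ▸ hinj.ne hip
      simpa [hmode', Mode.todo, hw] using htail i hi hip
    · simp only [hmode', hmode, Mode.rounds, List.length_cons]
      omega
  · have hmode' : (s.step d y).mode = .pair p (w :: rest) := by
      simp [step, next, hmode, feedback_eq_G_iff, hguessp, hG]
    refine ⟨⟨eq_of_pins_step hs.eq_of_pins, fun i hi => ?_, ?_⟩, ?_⟩
    · rw [hmode']
      by_cases hip : i = p
      · subst hip; simpa [Mode.todo] using hp
      · exact htail i hi hip
    · rw [hmode']
      rintro _ _ ⟨⟩
      exact ⟨hinj, pins_step_eq_none.2 ⟨hpinp, hguessp ▸ hG⟩, by simp_all [eq_comm]⟩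
    · simp only [hmode', hmode, Mode.rounds, List.length_cons]
      omega

theorem step (hs : s.Consistent y) (hr : 2 ≤ s.mode.rounds) :
    (s.step d y).Consistent y ∧ (s.step d y).mode.rounds + 1 = s.mode.rounds := by
  rcases hmode : s.mode with todo | ⟨p, todo⟩ <;> rw [hmode, Mode.rounds] at hr
  · simpa [hmode] using hs.step_of_chain (d := d) hmode (by omega)
  · simpa [hmode] using hs.step_of_pair (d := d) hmode (by omega)

theorem guess_iterate_step (hs : s.Consistent y) :
    ((State.step d y)^[s.mode.rounds - 1] s).guess d = y := by
  induction h : s.mode.rounds - 1 generalizing s with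
  | zero => exact hs.guess_eq (by omega)
  | succ m ih =>
    obtain ⟨hs', hr⟩ := hs.step (d := d) (by omega)
    rw [iterate_succ_apply]
    exact ih hs' (by omega)

end Consistent

end State

section Blocks

variable {c : ℕ} (e : Fin c × Fin n ≃ Fin k)

def feedbackOfColor (fb : Fin c → Fin n → Fbk) (v : Fin k) : Fbk :=
  fb (e.symm v).1 (e.symm v).2

noncomputable def presentColors (fb : Fin c → Fin n → Fbk) : Finset (Fin k) :=
  univ.filter fun v => feedbackOfColor e fb v ≠ .B

noncomputable def openingPins (fb : Fin c → Fin n → Fbk) (i : Fin n) : Option (Fin k) :=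
  if h : ∃ r, fb r i = .G then some (e (h.choose, i)) else none

noncomputable def initState (fb : Fin c → Fin n → Fbk) : State k n :=
  if (presentColors e fb).card ≠ n then ⟨fun _ => none, .chain (presentColors e fb).toList⟩
  else if h : ∃ v ∈ presentColors e fb, feedbackOfColor e fb v ≠ .G then
    ⟨fun _ => none,
      .pair (e.symm h.choose).2 (h.choose :: ((presentColors e fb).erase h.choose).toList)⟩
  else ⟨openingPins e fb, .chain []⟩

noncomputable def blockStrategy (d : Fin k) : Strategy k n :=
  .openingThen c (fun r i => e (r, i)) (initState e) (State.next d) (State.guess d)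

section Opening

variable (y : Fin n → Fin k)

def openingFeedback (r : Fin c) : Fin n → Fbk :=
  feedback (fun i => e (r, i)) y

theorem feedbackOfColor_ne_B_iff {v : Fin k} :
    feedbackOfColor e (openingFeedback e y) v ≠ .B ↔ v ∈ Set.range y := by
  have hinj : Injective fun i => e ((e.symm v).1, i) := fun i j h => by simpa using h
  simpa [feedbackOfColor, openingFeedback] using
    feedback_ne_B_iff_of_injective (y := y) (i := (e.symm v).2) hinj

theorem feedbackOfColor_eq_G_iff {v : Fin k} :
    feedbackOfColor e (openingFeedback e y) v = .G ↔ v = y (e.symm v).2 := by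
  simp [feedbackOfColor, openingFeedback, feedback_eq_G_iff]

theorem presentColors_openingFeedback : presentColors e (openingFeedback e y) = univ.image y := by
  ext v
  simpa [presentColors, eq_comm] using feedbackOfColor_ne_B_iff e y

theorem eq_of_openingPins (i : Fin n) (v : Fin k)
    (h : openingPins e (openingFeedback e y) i = some v) : y i = v := by
  unfold openingPins at h
  split_ifs at h with hG
  cases h
  exact ((feedback_eq_G_iff.1 hG.choose_spec).symm)

theorem initState_consistent (hn : 2 ≤ n) :
    (initState e (openingFeedback e y)).Consistent y ∧
      (initState e (openingFeedback e y)).mode.rounds ≤ n - 1 := by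
  unfold initState
  set R := presentColors e (openingFeedback e y)
  have hR : R = univ.image y := presentColors_openingFeedback e y
  have hyR (i : Fin n) : y i ∈ R := hR ▸ mem_image_of_mem y (mem_univ i)
  have hcard : R.card ≤ n := hR ▸ card_image_le.trans (by simp)
  have hinj (h : R.card = n) : Injective y := by
    rw [← Set.injOn_univ]
    simpa using injOn_of_card_image_eq (s := univ) (f := y) (by simpa [← hR] using h)
  split_ifs with hfew hmiss
  · refine ⟨⟨by simp, fun i _ => by simpa [Mode.todo] using hyR i, by simp⟩, ?_⟩
    simp only [Mode.rounds, length_toList]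
    omega
  · obtain ⟨hv₀, hmiss₀⟩ := hmiss.choose_spec
    set v₀ := hmiss.choose
    have hp : y (e.symm v₀).2 ≠ v₀ := fun h => hmiss₀ ((feedbackOfColor_eq_G_iff e y).2 h.symm)
    refine ⟨⟨by simp, fun i _ => ?_, ?_⟩, ?_⟩
    · by_cases hi : y i = v₀ <;> simp [Mode.todo, hi, hyR]
    · rintro _ _ ⟨⟩
      exact ⟨hinj (not_not.1 hfew), rfl, by simp [hp, hyR]⟩
    · simp [Mode.rounds, card_erase_of_mem hv₀]
      omega
  · have hfull (i : Fin n) : openingPins e (openingFeedback e y) i ≠ none := by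
      have hhit : y i = y (e.symm (y i)).2 :=
        (feedbackOfColor_eq_G_iff e y).1 (not_not.1 fun h => hmiss ⟨_, hyR i, h⟩)
      have hi : e.symm (y i) = ((e.symm (y i)).1, i) :=
        Prod.ext rfl (hinj (not_not.1 hfew) hhit).symm
      have hG : ∃ r, openingFeedback e y r i = .G :=
        ⟨(e.symm (y i)).1, by rw [openingFeedback, feedback_eq_G_iff, ← hi, e.apply_symm_apply]⟩
      simp [openingPins, hG]
    refine ⟨⟨eq_of_openingPins e y, fun i hi => absurd hi (hfull i), by simp⟩, ?_⟩
    simp only [Mode.rounds, List.length_nil]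
    omega

end Opening

theorem winsIn_blockStrategy (d : Fin k) (hn : 1 ≤ n) :
    WinsIn (blockStrategy e d) (c + n - 1) := by
  intro y
  rcases hn.eq_or_lt with rfl | hn
  · refine ⟨(e.symm (y 0)).1, by omega, ?_⟩
    funext i
    rw [blockStrategy, guess_openingThen_of_lt, Subsingleton.elim i (e.symm (y 0)).2, Prod.mk.eta,
      e.apply_symm_apply]
    exact congrArg y (Subsingleton.elim _ _)
  · obtain ⟨hs, hr⟩ := initState_consistent e y hn
    refine ⟨c + ((initState e (openingFeedback e y)).mode.rounds - 1), by omega, ?_⟩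
    rw [blockStrategy, guess_openingThen_add]
    exact hs.guess_iterate_step

end Blocks

end CM

/-- Upper bound for `k = c·n` colors: `F(c·n, n) ≤ c + n − 1`. -/
theorem stmt15 (c n : ℕ) (hc : 1 ≤ c) (hn : 1 ≤ n) :
    CM.F (c * n) n ≤ c + n - 1 :=
  Nat.sInf_le ⟨_, CM.winsIn_blockStrategy finProdFinEquiv ⟨0, Nat.mul_pos hc hn⟩ hn⟩
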